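/- Let d ≥ 1, let v : ℝ × ℝ^d → ℝ^d be continuously differentiable, and let ψ : ℝ × ℝ^d → ℝ^d be twice continuously differentiable with ∂_t ψ(t,x) + D_x ψ(t,x)·v(t,x) = 0 for all (t,x) and ψ(1,x) = x for all x. Given a continuously differentiable λ₁ : ℝ^d → ℝ, define λ(t,x) := det(D_x ψ(t,x)) · λ₁(ψ(t,x)). Then λ satisfies the adjoint (continuity) equation ∂_t λ(t,x) + div_x( λ(t,x)·v(t,x) ) = 0 for all (t,x), with terminal condition λ(1,·) = λ₁. (This is the representation λ(t) = J(t)·λ(1)∘ψ(t) of the adjoint variable used in PDE-constrained LDDMM based on the state equation.) -/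

import Mathlib

/-!
The space-time field `V = (1, v)` annihilates `ψ`: the state equation says `Dψ · V = 0`.
Differentiating this identity and using the symmetry of `D²ψ` shows that the spatial
Jacobian `G = Dₓψ` satisfies `D_V G = -G · Dₓv`, so Jacobi's formula
`det'(A)(A B) = det A · tr B` gives `D_V J = -J div v` for `J = det G`. As `λ₁ ∘ ψ` is
constant along `V`, the product `λ = J · λ₁ ∘ ψ` satisfies `D_V λ = -λ div v`, which is
`∂ₜλ + div(λ v) = 0` once `div(λ v) = Dₓλ · v + λ div v` is expanded. At `t = 1` the map
`ψ(1, ·)` is the identity, so `J = 1`.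
-/

/-- Divergence of a vector field on `ℝ^d`: the trace of its (Fréchet) Jacobian. -/
noncomputable def spatialDiv {d : ℕ}
    (w : EuclideanSpace ℝ (Fin d) → EuclideanSpace ℝ (Fin d))
    (x : EuclideanSpace ℝ (Fin d)) : ℝ :=
  LinearMap.trace ℝ (EuclideanSpace ℝ (Fin d)) (fderiv ℝ w x).toLinearMap

/-- The Jacobian determinant `J(t,x) = det(Dₓψ(t,x))` of a time-dependent map. -/
noncomputable def jacDet {d : ℕ}
    (ψ : ℝ × EuclideanSpace ℝ (Fin d) → EuclideanSpace ℝ (Fin d))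
    (t : ℝ) (x : EuclideanSpace ℝ (Fin d)) : ℝ :=
  LinearMap.det (fderiv ℝ (fun y => ψ (t, y)) x).toLinearMap

open Module ContinuousLinearMap Filter Topology

theorem Module.Basis.det_update_self {R M ι : Type*} [CommRing R] [AddCommGroup M]
    [Module R M] [Fintype ι] [DecidableEq ι] (b : Basis ι R M) (i : ι) (y : M) :
    b.det (Function.update b i y) = b.repr y i := by
  rw [b.det_apply, b.toMatrix_update, b.toMatrix_self, ← Matrix.cramer_apply, Matrix.cramer_one]
  rfl

section Jacobi

variable {E : Type*} [NormedAddCommGroup E] [NormedSpace ℝ E]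

theorem Module.Basis.continuous_det {ι : Type*} [Fintype ι] [DecidableEq ι]
    (b : Basis ι ℝ E) : Continuous b.det := by
  simp_rw [funext b.det_apply]
  refine Continuous.matrix_det (continuous_pi fun i => continuous_pi fun j => ?_)
  simp only [Basis.toMatrix_apply]
  exact (continuous_apply i).comp (b.equivFunL.continuous.comp (continuous_apply j))

theorem ContinuousLinearMap.exists_hasFDerivAt_det {ι : Type*} [Fintype ι] [DecidableEq ι]
    (b : Basis ι ℝ E) (A : E →L[ℝ] E) :
    ∃ D : (E →L[ℝ] E) →L[ℝ] ℝ, HasFDerivAt (fun A : E →L[ℝ] E => A.det) D A ∧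
      ∀ H : E →L[ℝ] E, D H = ∑ i, b.det (Function.update (A ∘ b) i (H (b i))) := by
  let M : ContinuousMultilinearMap ℝ (fun _ : ι => E) ℝ :=
    { b.det.toMultilinearMap with cont := b.continuous_det }
  let evalBasis : (E →L[ℝ] E) →L[ℝ] (ι → E) := pi fun i => apply ℝ E (b i)
  have hdet : (fun A : E →L[ℝ] E => A.det) = M ∘ evalBasis := by
    funext A
    change LinearMap.det (A : E →ₗ[ℝ] E) = b.det ((A : E →ₗ[ℝ] E) ∘ b)
    rw [b.det_comp, b.det_self, mul_one]
  refine ⟨(M.linearDeriv (evalBasis A)).comp evalBasis, ?_, fun H => ?_⟩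
  · rw [hdet]
    exact (M.hasFDerivAt (evalBasis A)).comp A evalBasis.hasFDerivAt
  · simp only [comp_apply, ContinuousMultilinearMap.linearDeriv_apply]
    rfl

variable [FiniteDimensional ℝ E]

theorem ContinuousLinearMap.differentiable_det :
    Differentiable ℝ (fun A : E →L[ℝ] E => A.det) := fun A =>
  (exists_hasFDerivAt_det (finBasis ℝ E) A).choose_spec.1.differentiableAt

theorem ContinuousLinearMap.fderiv_det_apply_comp (A B : E →L[ℝ] E) :
    fderiv ℝ (fun A : E →L[ℝ] E => A.det) A (A ∘L B) = A.det * LinearMap.trace ℝ E B := by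
  let b := finBasis ℝ E
  obtain ⟨D, hD, hDapply⟩ := exists_hasFDerivAt_det b A
  have hcol : ∀ i, Function.update (A ∘ b) i ((A ∘L B) (b i))
      = (A : E →ₗ[ℝ] E) ∘ Function.update b i (B (b i)) :=
    fun i => (Function.comp_update _ _ _ _).symm
  rw [hD.fderiv, hDapply]
  simp_rw [hcol, b.det_comp, b.det_update_self, ← Finset.mul_sum]
  rw [LinearMap.trace_eq_matrix_trace ℝ b, Matrix.trace]
  simp only [Matrix.diag_apply, LinearMap.toMatrix_apply, coe_coe]

end Jacobi

section Divergence

variable {E : Type*} [NormedAddCommGroup E] [NormedSpace ℝ E] [FiniteDimensional ℝ E]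

theorem trace_fderiv_smul {φ : E → ℝ} {w : E → E} {x : E} (hφ : DifferentiableAt ℝ φ x)
    (hw : DifferentiableAt ℝ w x) :
    LinearMap.trace ℝ E (fderiv ℝ (fun y => φ y • w y) x)
      = fderiv ℝ φ x (w x) + φ x * LinearMap.trace ℝ E (fderiv ℝ w x) := by
  rw [fderiv_fun_smul hφ hw, toLinearMap_add, map_add, toLinearMap_smul, map_smul, smul_eq_mul,
    add_comm]
  exact congrArg (· + _) (LinearMap.trace_smulRight _ _)

end Divergence

section SecondDerivative

variable {F G : Type*} [NormedAddCommGroup F] [NormedSpace ℝ F] [NormedAddCommGroup G]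
  [NormedSpace ℝ G]

theorem ContDiffAt.differentiableAt_fderiv {f : F → G} {p : F} (hf : ContDiffAt ℝ 2 f p) :
    DifferentiableAt ℝ (fderiv ℝ f) p :=
  (hf.fderiv_right (m := 1) le_rfl).differentiableAt one_ne_zero

theorem fderiv_fderiv_apply_of_fderiv_apply_eq_zero {f : F → G} {V : F → F} {p : F}
    (hf : DifferentiableAt ℝ (fderiv ℝ f) p) (hV : DifferentiableAt ℝ V p)
    (h : ∀ᶠ q in 𝓝 p, fderiv ℝ f q (V q) = 0) (u : F) :
    fderiv ℝ (fderiv ℝ f) p u (V p) = -fderiv ℝ f p (fderiv ℝ V p u) := by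
  have hderiv := hf.hasFDerivAt.clm_apply hV.hasFDerivAt
  have hzero := (hasFDerivAt_const (𝕜 := ℝ) (0 : G) p).congr_of_eventuallyEq h
  have hu := congrArg (fun L => L u) (hderiv.unique hzero)
  simp only [add_apply, comp_apply, flip_apply, zero_apply] at hu
  exact eq_neg_of_add_eq_zero_right hu

end SecondDerivative

section SpaceTime

variable {E F : Type*} [NormedAddCommGroup E] [NormedSpace ℝ E] [NormedAddCommGroup F]
  [NormedSpace ℝ F]

noncomputable def spatialFDeriv (ψ : ℝ × E → F) (q : ℝ × E) : E →L[ℝ] F :=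
  fderiv ℝ ψ q ∘L inr ℝ ℝ E

theorem hasFDerivAt_slice_spatialFDeriv {ψ : ℝ × E → F} {t : ℝ} {x : E}
    (hψ : DifferentiableAt ℝ ψ (t, x)) :
    HasFDerivAt (fun y => ψ (t, y)) (spatialFDeriv ψ (t, x)) x :=
  hψ.hasFDerivAt.comp x (hasFDerivAt_prodMk_right t x)

theorem hasDerivAt_slice_fderiv {ψ : ℝ × E → F} {t : ℝ} {x : E}
    (hψ : DifferentiableAt ℝ ψ (t, x)) :
    HasDerivAt (fun s => ψ (s, x)) (fderiv ℝ ψ (t, x) (1, 0)) t :=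
  hψ.hasFDerivAt.comp_hasDerivAt t ((hasDerivAt_id t).prodMk (hasDerivAt_const t x))

theorem fderiv_apply_one_eq_deriv_add_fderiv {ψ : ℝ × E → F} {t : ℝ} {x : E}
    (hψ : DifferentiableAt ℝ ψ (t, x)) (w : E) :
    fderiv ℝ ψ (t, x) (1, w)
      = deriv (fun s => ψ (s, x)) t + fderiv ℝ (fun y => ψ (t, y)) x w := by
  rw [(hasDerivAt_slice_fderiv hψ).deriv, (hasFDerivAt_slice_spatialFDeriv hψ).fderiv,
    spatialFDeriv, comp_apply, inr_apply, ← map_add, Prod.mk_add_mk, add_zero, zero_add]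

theorem hasFDerivAt_spatialFDeriv {ψ : ℝ × E → F} {p : ℝ × E}
    (hψ : DifferentiableAt ℝ (fderiv ℝ ψ) p) :
    HasFDerivAt (spatialFDeriv ψ)
      ((compL ℝ E (ℝ × E) F).flip (inr ℝ ℝ E) ∘L fderiv ℝ (fderiv ℝ ψ) p) p := by
  show HasFDerivAt (fun q => fderiv ℝ ψ q ∘L inr ℝ ℝ E) _ p
  simpa using hψ.hasFDerivAt.clm_comp (hasFDerivAt_const (inr ℝ ℝ E) p)

theorem fderiv_spatialFDeriv_apply_flow {ψ : ℝ × E → F} {v : ℝ × E → E} {p : ℝ × E}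
    (hψ : ContDiffAt ℝ 2 ψ p) (hv : DifferentiableAt ℝ v p)
    (hstate : ∀ᶠ q in 𝓝 p, fderiv ℝ ψ q (1, v q) = 0) :
    fderiv ℝ (spatialFDeriv ψ) p (1, v p) = -(spatialFDeriv ψ p ∘L spatialFDeriv v p) := by
  have hV : HasFDerivAt (fun q => ((1 : ℝ), v q))
      ((0 : ℝ × E →L[ℝ] ℝ).prod (fderiv ℝ v p)) p :=
    (hasFDerivAt_const 1 p).prodMk hv.hasFDerivAt
  rw [(hasFDerivAt_spatialFDeriv hψ.differentiableAt_fderiv).fderiv]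
  ext1 u
  have hsymm := hψ.isSymmSndFDerivAt (by simp) (1, v p) (inr ℝ ℝ E u)
  have hdiff := fderiv_fderiv_apply_of_fderiv_apply_eq_zero hψ.differentiableAt_fderiv
    hV.differentiableAt hstate (inr ℝ ℝ E u)
  simp only [comp_apply, flip_apply, compL_apply, neg_apply, spatialFDeriv, hsymm, hdiff,
    hV.fderiv]
  rfl

end SpaceTime

section Liouville

variable {E : Type*} [NormedAddCommGroup E] [NormedSpace ℝ E] [FiniteDimensional ℝ E]
  {ψ v : ℝ × E → E} {p : ℝ × E}

theorem differentiableAt_det_spatialFDeriv (hψ : ContDiffAt ℝ 2 ψ p) :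
    DifferentiableAt ℝ (fun q => (spatialFDeriv ψ q).det) p :=
  (differentiable_det (E := E) _).comp (g := fun A : E →L[ℝ] E => A.det) p
    (hasFDerivAt_spatialFDeriv hψ.differentiableAt_fderiv).differentiableAt

theorem fderiv_det_spatialFDeriv_apply_flow (hψ : ContDiffAt ℝ 2 ψ p)
    (hv : DifferentiableAt ℝ v p) (hstate : ∀ᶠ q in 𝓝 p, fderiv ℝ ψ q (1, v q) = 0) :
    fderiv ℝ (fun q => (spatialFDeriv ψ q).det) p (1, v p)
      = -((spatialFDeriv ψ p).det * LinearMap.trace ℝ E (spatialFDeriv v p)) := by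
  have hG := hasFDerivAt_spatialFDeriv hψ.differentiableAt_fderiv
  rw [fderiv_fun_comp p (differentiable_det _) hG.differentiableAt, comp_apply,
    fderiv_spatialFDeriv_apply_flow hψ hv hstate, map_neg, fderiv_det_apply_comp]

theorem fderiv_density_apply_flow {ρ : E → ℝ} (hψ : ContDiffAt ℝ 2 ψ p)
    (hv : DifferentiableAt ℝ v p) (hρ : DifferentiableAt ℝ ρ (ψ p))
    (hstate : ∀ᶠ q in 𝓝 p, fderiv ℝ ψ q (1, v q) = 0) :
    fderiv ℝ (fun q => (spatialFDeriv ψ q).det * ρ (ψ q)) p (1, v p)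
      = -((spatialFDeriv ψ p).det * ρ (ψ p) * LinearMap.trace ℝ E (spatialFDeriv v p)) := by
  have hρψ : HasFDerivAt (fun q => ρ (ψ q)) (fderiv ℝ ρ (ψ p) ∘L fderiv ℝ ψ p) p :=
    hρ.hasFDerivAt.comp p (hψ.differentiableAt two_ne_zero).hasFDerivAt
  rw [((differentiableAt_det_spatialFDeriv hψ).hasFDerivAt.fun_mul hρψ).fderiv]
  simp only [add_apply, smul_apply, comp_apply, hstate.self_of_nhds, map_zero,
    fderiv_det_spatialFDeriv_apply_flow hψ hv hstate, smul_eq_mul]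
  ring

end Liouville

theorem stmt6_general {d : ℕ}
    (v : ℝ × EuclideanSpace ℝ (Fin d) → EuclideanSpace ℝ (Fin d))
    (hv : ContDiff ℝ 1 v)
    (ψ : ℝ × EuclideanSpace ℝ (Fin d) → EuclideanSpace ℝ (Fin d))
    (hψ : ContDiff ℝ 2 ψ)
    (hdef : ∀ (t : ℝ) (x : EuclideanSpace ℝ (Fin d)),
      deriv (fun s => ψ (s, x)) t + fderiv ℝ (fun y => ψ (t, y)) x (v (t, x)) = 0)
    (hψ1 : ∀ x, ψ (1, x) = x)
    (lam1 : EuclideanSpace ℝ (Fin d) → ℝ) (hlam1 : ContDiff ℝ 1 lam1) :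
    (∀ (t : ℝ) (x : EuclideanSpace ℝ (Fin d)),
        deriv (fun s => jacDet ψ s x * lam1 (ψ (s, x))) t
          + spatialDiv (fun y => (jacDet ψ t y * lam1 (ψ (t, y))) • v (t, y)) x = 0)
    ∧ (∀ x, jacDet ψ 1 x * lam1 (ψ (1, x)) = lam1 x) := by
  have hψd : Differentiable ℝ ψ := hψ.differentiable two_ne_zero
  have hvd : Differentiable ℝ v := hv.differentiable one_ne_zero
  have hjac : ∀ t y, jacDet ψ t y = (spatialFDeriv ψ (t, y)).det := fun t y => by
    rw [jacDet, (hasFDerivAt_slice_spatialFDeriv (hψd _)).fderiv]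
  have hstate : ∀ q, fderiv ℝ ψ q (1, v q) = 0 := fun ⟨t, x⟩ => by
    rw [fderiv_apply_one_eq_deriv_add_fderiv (hψd _), hdef]
  refine ⟨fun t x => ?_, fun x => ?_⟩
  · have hdens : DifferentiableAt ℝ (fun q => (spatialFDeriv ψ q).det * lam1 (ψ q)) (t, x) :=
      (differentiableAt_det_spatialFDeriv hψ.contDiffAt).mul
        ((hlam1.differentiable one_ne_zero _).comp _ (hψd _))
    have hflow := fderiv_density_apply_flow hψ.contDiffAt (hvd (t, x))
      (hlam1.differentiable one_ne_zero _) (Eventually.of_forall hstate)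
    simp only [hjac]
    rw [spatialDiv, trace_fderiv_smul (hasFDerivAt_slice_spatialFDeriv hdens).differentiableAt
        (hasFDerivAt_slice_spatialFDeriv (hvd _)).differentiableAt, ← add_assoc,
      ← fderiv_apply_one_eq_deriv_add_fderiv hdens, hflow,
      (hasFDerivAt_slice_spatialFDeriv (hvd _)).fderiv]
    ring
  · have hid : (fun y => ψ (1, y)) = id := funext hψ1
    rw [jacDet, hid, fderiv_id, hψ1]
    simp

/-- if `v` is `C¹`, `ψ` is `C²`, satisfies the deformation state equation
`∂ₜ ψ + Dₓψ · v = 0` and `ψ(1,·) = id`, then for any `C¹` terminal datum `λ₁`, the function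
`λ(t,x) = det(Dₓψ(t,x)) · λ₁(ψ(t,x))` satisfies the adjoint (continuity) equation
`∂ₜ λ + div_x(λ v) = 0` with `λ(1,·) = λ₁`. -/
theorem stmt6 {d : ℕ} (hd : 1 ≤ d)
    (v : ℝ × EuclideanSpace ℝ (Fin d) → EuclideanSpace ℝ (Fin d))
    (hv : ContDiff ℝ 1 v)
    (ψ : ℝ × EuclideanSpace ℝ (Fin d) → EuclideanSpace ℝ (Fin d))
    (hψ : ContDiff ℝ 2 ψ)
    (hdef : ∀ (t : ℝ) (x : EuclideanSpace ℝ (Fin d)),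
      deriv (fun s => ψ (s, x)) t + fderiv ℝ (fun y => ψ (t, y)) x (v (t, x)) = 0)
    (hψ1 : ∀ x, ψ (1, x) = x)
    (lam1 : EuclideanSpace ℝ (Fin d) → ℝ) (hlam1 : ContDiff ℝ 1 lam1) :
    (∀ (t : ℝ) (x : EuclideanSpace ℝ (Fin d)),
        deriv (fun s => jacDet ψ s x * lam1 (ψ (s, x))) t
          + spatialDiv (fun y => (jacDet ψ t y * lam1 (ψ (t, y))) • v (t, y)) x = 0)
    ∧ (∀ x, jacDet ψ 1 x * lam1 (ψ (1, x)) = lam1 x) :=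
  stmt6_general v hv ψ hψ hdef hψ1 lam1 hlam1
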